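/- arXiv:1702.03449 — 4 statements merged into one kernel-verified Lean document; each statement's English description precedes it below -/
import Mathlib

section
/- Let 0 < δ < γ, L > 0, and z ∈ ℝ. Then x̂ = sgn(z)·min{(γ/(γ−δ))·|z|, L} is a minimizer of the function x ↦ γ(z − x)² − δ x² over the interval [−L, L], and if z ≠ 0 it is the unique minimizer. Here sgn(z) = +1 if z ≥ 0 and sgn(z) = −1 if z < 0. -/
/-! Completing the square, `γ (z - x)² - δ x² = (γ - δ) (x - m)² - γ δ z² / (γ - δ)` with
`m = γ z / (γ - δ)`. Since `γ > δ`, minimizing over `[-L, L]` amounts to finding the point of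
`[-L, L]` nearest to `m`, which is the clamp `max (-L) (min L m)` and is unique. For `γ > 0` the
expression `sgn z · min (γ / (γ - δ) |z|, L)` is exactly that clamp. -/

lemma sq_sub_clamp_lt {a b m x : ℝ} (hx : x ∈ Set.Icc a b) (hne : x ≠ max a (min b m)) :
    (max a (min b m) - m) ^ 2 < (x - m) ^ 2 := by
  obtain ⟨hax, hxb⟩ := hx
  rcases le_or_gt m a with hma | ham
  · have hp : max a (min b m) = a := max_eq_left ((min_le_right _ _).trans hma)
    rw [hp] at hne ⊢
    have : a < x := lt_of_le_of_ne hax (Ne.symm hne)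
    nlinarith
  rcases le_or_gt b m with hbm | hmb
  · have hp : max a (min b m) = b := by rw [min_eq_left hbm, max_eq_right (hax.trans hxb)]
    rw [hp] at hne ⊢
    have : x < b := lt_of_le_of_ne hxb hne
    nlinarith
  · have hp : max a (min b m) = m := by rw [min_eq_right hmb.le, max_eq_right ham.le]
    rw [hp] at hne ⊢
    simpa using pow_pos (abs_pos.mpr (sub_ne_zero.mpr hne)) 2

lemma sign_mul_min_abs_eq_clamp {c L : ℝ} (hc : 0 ≤ c) (hL : 0 ≤ L) (z : ℝ) :
    (if 0 ≤ z then 1 else -1) * min (c * |z|) L = max (-L) (min L (c * z)) := by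
  rcases le_or_gt 0 z with hz | hz
  · have : 0 ≤ c * z := mul_nonneg hc hz
    rw [if_pos hz, abs_of_nonneg hz, one_mul, min_comm, max_eq_right (by linarith [le_min hL this])]
  · have : c * z ≤ 0 := mul_nonpos_of_nonneg_of_nonpos hc hz.le
    rw [if_neg hz.not_ge, abs_of_neg hz, min_eq_right (by linarith : c * z ≤ L), mul_neg,
      neg_one_mul, ← max_neg_neg, neg_neg, max_comm]

lemma mul_sub_sq_sub_mul_sq_eq {γ δ : ℝ} (h : γ - δ ≠ 0) (z x : ℝ) :
    γ * (z - x) ^ 2 - δ * x ^ 2 = (γ - δ) * (x - γ * z / (γ - δ)) ^ 2 - γ * δ * z ^ 2 / (γ - δ) := by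
  field_simp
  ring

/-- x̂ = sgn(z)·min{(γ/(γ−δ))·|z|, L} minimizes
x ↦ γ(z − x)² − δ x² over [−L, L], uniquely when z ≠ 0. -/
theorem stmt_5 (γ δ L z : ℝ) (hδ : 0 < δ) (hδγ : δ < γ) (hL : 0 < L) :
    let sgn : ℝ → ℝ := fun a => if 0 ≤ a then 1 else -1
    let xhat : ℝ := sgn z * min (γ / (γ - δ) * |z|) L
    xhat ∈ Set.Icc (-L) L ∧
      (∀ x ∈ Set.Icc (-L) L,
        γ * (z - xhat) ^ 2 - δ * xhat ^ 2 ≤ γ * (z - x) ^ 2 - δ * x ^ 2) ∧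
      (z ≠ 0 → ∀ x ∈ Set.Icc (-L) L, x ≠ xhat →
        γ * (z - xhat) ^ 2 - δ * xhat ^ 2 < γ * (z - x) ^ 2 - δ * x ^ 2) := by
  intro sgn xhat
  have hγδ : 0 < γ - δ := sub_pos.mpr hδγ
  have hxhat : xhat = max (-L) (min L (γ * z / (γ - δ))) := by
    rw [mul_div_right_comm]
    exact sign_mul_min_abs_eq_clamp (div_nonneg (hδ.trans hδγ).le hγδ.le) hL.le z
  have hmem : xhat ∈ Set.Icc (-L) L :=
    hxhat ▸ ⟨le_max_left _ _, max_le (by linarith) (min_le_left _ _)⟩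
  have hstrict : ∀ x ∈ Set.Icc (-L) L, x ≠ xhat →
      γ * (z - xhat) ^ 2 - δ * xhat ^ 2 < γ * (z - x) ^ 2 - δ * x ^ 2 := by
    intro x hx hne
    rw [mul_sub_sq_sub_mul_sq_eq hγδ.ne', mul_sub_sq_sub_mul_sq_eq hγδ.ne', hxhat]
    rw [hxhat] at hne
    exact sub_lt_sub_right (mul_lt_mul_of_pos_left (sq_sub_clamp_lt hx hne) hγδ) _
  refine ⟨hmem, fun x hx => ?_, fun _ => hstrict⟩
  rcases eq_or_ne x xhat with rfl | hne
  · exact le_rfl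
  · exact (hstrict x hx hne).le
end

section
/- Let τ > 0 and δ > 0 with τδ < 1, let L > 0, and let z ∈ ℝ. Then x̂ = sgn(z)·min{|z|/(1 − τδ), L} is a minimizer of the function x ↦ −(τδ/2) x² + (1/2)(x − z)² over the interval [−L, L], and if z ≠ 0 it is the unique minimizer. Here sgn(z) = +1 if z ≥ 0 and sgn(z) = −1 if z < 0. -/
open Set

/-! With `a = τδ < 1`, the objective `x ↦ -(a/2) x² + (1/2)(x - z)²` is a quadratic with leading coefficient
`(1 - a)/2 > 0`, so it is strictly convex with unconstrained minimizer `z / (1 - a)`, and its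
minimizer over an interval is the projection (clamp) of `z / (1 - a)` onto that interval.
The point `sgn z · min (|z| / (1 - a), L)` is exactly that clamp onto `[-L, L]`, and the
first-order condition `(x - x̂)((1 - a) x̂ - z) ≥ 0` on the interval gives minimality, strict
away from `x̂` by strong convexity. -/

lemma sub_mul_projIcc_sub_nonneg {α : Type*} [Ring α] [LinearOrder α] [IsOrderedRing α]
    {a b : α} (h : a ≤ b) (w : α) {x : α} (hx : x ∈ Icc a b) :
    0 ≤ (x - projIcc a b h w) * (projIcc a b h w - w) := by
  rcases le_or_gt w a with hwa | haw
  · rw [projIcc_of_le_left h hwa]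
    exact mul_nonneg (sub_nonneg.2 hx.1) (sub_nonneg.2 hwa)
  rcases le_or_gt b w with hbw | hwb
  · rw [projIcc_of_right_le h hbw]
    exact mul_nonneg_of_nonpos_of_nonpos (sub_nonpos.2 hx.2) (sub_nonpos.2 hbw)
  · simp [projIcc_of_mem h ⟨haw.le, hwb.le⟩]

lemma sign_mul_min_abs_div_eq_projIcc {c L : ℝ} (hc : 0 < c) (hL : 0 ≤ L) (z : ℝ) :
    (if 0 ≤ z then 1 else -1) * min (|z| / c) L = projIcc (-L) L (neg_le_self hL) (z / c) := by
  rw [coe_projIcc]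
  split_ifs with hz
  · have : 0 ≤ z / c := div_nonneg hz hc.le
    rw [abs_of_nonneg hz, one_mul, min_comm, max_eq_right (le_min (by linarith) (by linarith))]
  · have : z / c < 0 := div_neg_of_neg_of_pos (not_le.1 hz) hc
    rw [abs_of_neg (not_le.1 hz), neg_div, neg_one_mul, ← max_neg_neg, neg_neg,
      min_eq_right (by linarith : z / c ≤ L), max_comm]

lemma objective_sub_objective (a z x y : ℝ) :
    (-(a / 2) * x ^ 2 + (1 / 2) * (x - z) ^ 2) - (-(a / 2) * y ^ 2 + (1 / 2) * (y - z) ^ 2)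
      = (x - y) * ((1 - a) * y - z) + (1 - a) / 2 * (x - y) ^ 2 := by
  ring

lemma objective_le_of_first_order {a z x y : ℝ} (ha : a ≤ 1)
    (h : 0 ≤ (x - y) * ((1 - a) * y - z)) :
    -(a / 2) * y ^ 2 + (1 / 2) * (y - z) ^ 2 ≤ -(a / 2) * x ^ 2 + (1 / 2) * (x - z) ^ 2 := by
  have := objective_sub_objective a z x y
  nlinarith [mul_nonneg (sub_nonneg.2 ha) (sq_nonneg (x - y))]

lemma objective_lt_of_first_order {a z x y : ℝ} (ha : a < 1) (hxy : x ≠ y)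
    (h : 0 ≤ (x - y) * ((1 - a) * y - z)) :
    -(a / 2) * y ^ 2 + (1 / 2) * (y - z) ^ 2 < -(a / 2) * x ^ 2 + (1 / 2) * (x - z) ^ 2 := by
  have := objective_sub_objective a z x y
  nlinarith [mul_pos (sub_pos.2 ha) (sq_pos_of_ne_zero (sub_ne_zero.2 hxy))]

theorem stmt_6_general (τ δ L z : ℝ) (hτδ : τ * δ < 1) (hL : 0 < L) :
    let sgn : ℝ → ℝ := fun a => if 0 ≤ a then 1 else -1
    let xhat : ℝ := sgn z * min (|z| / (1 - τ * δ)) L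
    xhat ∈ Set.Icc (-L) L ∧
      (∀ x ∈ Set.Icc (-L) L,
        -(τ * δ / 2) * xhat ^ 2 + (1 / 2) * (xhat - z) ^ 2
          ≤ -(τ * δ / 2) * x ^ 2 + (1 / 2) * (x - z) ^ 2) ∧
      (z ≠ 0 → ∀ x ∈ Set.Icc (-L) L, x ≠ xhat →
        -(τ * δ / 2) * xhat ^ 2 + (1 / 2) * (xhat - z) ^ 2
          < -(τ * δ / 2) * x ^ 2 + (1 / 2) * (x - z) ^ 2) := by
  intro sgn xhat
  have hc : 0 < 1 - τ * δ := sub_pos.2 hτδ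
  have hxhat : xhat = projIcc (-L) L (neg_le_self hL.le) (z / (1 - τ * δ)) :=
    sign_mul_min_abs_div_eq_projIcc hc hL.le z
  have first_order : ∀ x ∈ Icc (-L) L, 0 ≤ (x - xhat) * ((1 - τ * δ) * xhat - z) := by
    intro x hx
    have key := sub_mul_projIcc_sub_nonneg (neg_le_self hL.le) (z / (1 - τ * δ)) hx
    rw [← hxhat] at key
    calc 0 ≤ (1 - τ * δ) * ((x - xhat) * (xhat - z / (1 - τ * δ))) := mul_nonneg hc.le key
      _ = (x - xhat) * ((1 - τ * δ) * xhat - z) := by field_simp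
  refine ⟨hxhat ▸ Subtype.prop _, fun x hx => ?_, fun _ x hx hne => ?_⟩
  · exact objective_le_of_first_order hτδ.le (first_order x hx)
  · exact objective_lt_of_first_order hτδ hne (first_order x hx)

/-- x̂ = sgn(z)·min{|z|/(1 − τδ), L} minimizes
x ↦ −(τδ/2) x² + (1/2)(x − z)² over [−L, L], uniquely when z ≠ 0. -/
theorem stmt_6 (τ δ L z : ℝ) (hτ : 0 < τ) (hδ : 0 < δ) (hτδ : τ * δ < 1) (hL : 0 < L) :
    let sgn : ℝ → ℝ := fun a => if 0 ≤ a then 1 else -1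
    let xhat : ℝ := sgn z * min (|z| / (1 - τ * δ)) L
    xhat ∈ Set.Icc (-L) L ∧
      (∀ x ∈ Set.Icc (-L) L,
        -(τ * δ / 2) * xhat ^ 2 + (1 / 2) * (xhat - z) ^ 2
          ≤ -(τ * δ / 2) * x ^ 2 + (1 / 2) * (x - z) ^ 2) ∧
      (z ≠ 0 → ∀ x ∈ Set.Icc (-L) L, x ≠ xhat →
        -(τ * δ / 2) * xhat ^ 2 + (1 / 2) * (xhat - z) ^ 2
          < -(τ * δ / 2) * x ^ 2 + (1 / 2) * (x - z) ^ 2) :=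
  stmt_6_general τ δ L z hτδ hL
end

section
/- Let B, U be positive integers, A ∈ ℂ^{U×B}, 0 < δ < γ, ℓ > 0, and let B_ℓ = {x ∈ ℂ^B : |Re(x_b)| ≤ ℓ and |Im(x_b)| ≤ ℓ for all b}. Define E(z, x) = ‖A z‖₂² + γ‖z − x‖₂² − δ‖x‖₂². Suppose (z^{(t)}), (x^{(t)}) satisfy x^{(t)} ∈ B_ℓ, z^{(t+1)} minimizes z ↦ E(z, x^{(t)}) over ℂ^B, and x^{(t+1)} minimizes x ↦ E(z^{(t+1)}, x) over B_ℓ for all t ≥ 1. If (z*, x*) is a limit point of the sequence ((z^{(t)}, x^{(t)})) (i.e., the limit of a convergent subsequence), then z* minimizes z ↦ E(z, x*) over ℂ^B and x* minimizes x ↦ E(z*, x) over B_ℓ; that is, (z*, x*) is a coordinatewise minimizer and hence a stationary point of (BCR*). -/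
open Matrix BigOperators

/-- The objective E(z, x) = ‖A z‖₂² + γ‖z − x‖₂² − δ‖x‖₂² of (BCR*). -/
noncomputable def bcrObj {B U : ℕ} (A : Matrix (Fin U) (Fin B) ℂ) (γ δ : ℝ)
    (z x : Fin B → ℂ) : ℝ :=
  (∑ u, ‖A.mulVec z u‖ ^ 2) + γ * (∑ b, ‖z b - x b‖ ^ 2) - δ * (∑ b, ‖x b‖ ^ 2)

/-- The convex envelope B_ℓ = {x ∈ ℂ^B : |Re x_b| ≤ ℓ, |Im x_b| ≤ ℓ}. -/
def boxSet (B : ℕ) (ℓ : ℝ) : Set (Fin B → ℂ) :=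
  {x | ∀ b, |(x b).re| ≤ ℓ ∧ |(x b).im| ≤ ℓ}

/-!
Alternating minimization never increases the objective, so along the whole sequence the values
decrease to the limit value `f z* x*` of the convergent subsequence. For any competitor `w`,
`f z* x* ≤ f (z (t+1)) (x (t+1)) ≤ f (z (t+1)) (x t) ≤ f w (x t)`; letting `t` run along the
subsequence and using continuity gives `f z* x* ≤ f w x*`. The `x`-block is handled in the
same way one step earlier.
-/

open Filter Topology

theorem le_of_tendsto_comp_of_antitoneOn {γ : Type*} [LinearOrder γ] [TopologicalSpace γ]
    [OrderClosedTopology γ] {e : ℕ → γ} {φ : ℕ → ℕ} {n : ℕ} {L : γ}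
    (he : AntitoneOn e (Set.Ici n)) (hφ : StrictMono φ) (hL : Tendsto (e ∘ φ) atTop (𝓝 L))
    {t : ℕ} (ht : n ≤ t) : L ≤ e t :=
  le_of_tendsto hL <| eventually_atTop.2
    ⟨t, fun _ hk => he ht (ht.trans (hk.trans hφ.le_apply)) (hk.trans hφ.le_apply)⟩

namespace AlternatingMinimization

variable {α β : Type*} {f : α → β → ℝ} {S : Set β} {z : ℕ → α} {x : ℕ → β}
  (hxmem : ∀ t, x t ∈ S) (hzmin : ∀ t ≥ 1, ∀ w, f (z (t + 1)) (x t) ≤ f w (x t))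
  (hxmin : ∀ t ≥ 1, ∀ y ∈ S, f (z (t + 1)) (x (t + 1)) ≤ f (z (t + 1)) y)
include hxmem hzmin hxmin

theorem antitoneOn_value : AntitoneOn (fun t => f (z t) (x t)) (Set.Ici 1) :=
  antitoneOn_nat_Ici_of_succ_le fun t ht =>
    (hxmin t ht _ (hxmem t)).trans (hzmin t ht (z t))

variable [TopologicalSpace α] [TopologicalSpace β] (hf : Continuous (Function.uncurry f))
  {zs : α} {xs : β} {φ : ℕ → ℕ} (hφ : StrictMono φ)
  (hlim : Tendsto (fun k => (z (φ k), x (φ k))) atTop (𝓝 (zs, xs)))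
include hf hφ hlim

theorem limit_value_le {t : ℕ} (ht : 1 ≤ t) : f zs xs ≤ f (z t) (x t) :=
  le_of_tendsto_comp_of_antitoneOn (antitoneOn_value hxmem hzmin hxmin) hφ
    ((hf.tendsto (zs, xs)).comp hlim) ht

theorem limit_minimizes_fst (w : α) : f zs xs ≤ f w xs := by
  have hw : Tendsto (fun k => f w (x (φ k))) atTop (𝓝 (f w xs)) :=
    (hf.tendsto (w, xs)).comp (tendsto_const_nhds.prodMk_nhds hlim.snd_nhds)
  refine ge_of_tendsto hw (eventually_atTop.2 ⟨1, fun k hk => ?_⟩)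
  have hφk : 1 ≤ φ k := hk.trans hφ.le_apply
  calc f zs xs ≤ f (z (φ k + 1)) (x (φ k + 1)) :=
        limit_value_le hxmem hzmin hxmin hf hφ hlim (by omega)
    _ ≤ f (z (φ k + 1)) (x (φ k)) := hxmin _ hφk _ (hxmem _)
    _ ≤ f w (x (φ k)) := hzmin _ hφk w

theorem limit_minimizes_snd {y : β} (hy : y ∈ S) : f zs xs ≤ f zs y := by
  have hy' : Tendsto (fun k => f (z (φ k)) y) atTop (𝓝 (f zs y)) :=
    (hf.tendsto (zs, y)).comp (hlim.fst_nhds.prodMk_nhds tendsto_const_nhds)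
  refine ge_of_tendsto hy' (eventually_atTop.2 ⟨2, fun k hk => ?_⟩)
  have hφk : 2 ≤ φ k := hk.trans hφ.le_apply
  obtain ⟨t, ht⟩ : ∃ t, φ k = t + 1 := ⟨φ k - 1, by omega⟩
  rw [ht]
  exact (limit_value_le hxmem hzmin hxmin hf hφ hlim (by omega)).trans (hxmin t (by omega) y hy)

end AlternatingMinimization

theorem continuous_bcrObj {B U : ℕ} (A : Matrix (Fin U) (Fin B) ℂ) (γ δ : ℝ) :
    Continuous (Function.uncurry (bcrObj A γ δ)) := by
  unfold Function.uncurry bcrObj Matrix.mulVec dotProduct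
  fun_prop

theorem stmt_11_general (B U : ℕ)
    (A : Matrix (Fin U) (Fin B) ℂ) (γ δ ℓ : ℝ)
    (zseq xseq : ℕ → Fin B → ℂ)
    (hxmem : ∀ t, xseq t ∈ boxSet B ℓ)
    (hzmin : ∀ t ≥ 1, ∀ z : Fin B → ℂ,
      bcrObj A γ δ (zseq (t + 1)) (xseq t) ≤ bcrObj A γ δ z (xseq t))
    (hxmin : ∀ t ≥ 1, ∀ x ∈ boxSet B ℓ,
      bcrObj A γ δ (zseq (t + 1)) (xseq (t + 1)) ≤ bcrObj A γ δ (zseq (t + 1)) x)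
    (zstar xstar : Fin B → ℂ)
    (hlim : ∃ φ : ℕ → ℕ, StrictMono φ ∧
      Filter.Tendsto (fun k => (zseq (φ k), xseq (φ k))) Filter.atTop
        (nhds (zstar, xstar))) :
    (∀ z : Fin B → ℂ, bcrObj A γ δ zstar xstar ≤ bcrObj A γ δ z xstar) ∧
    (∀ x ∈ boxSet B ℓ, bcrObj A γ δ zstar xstar ≤ bcrObj A γ δ zstar x) := by
  obtain ⟨φ, hφ, hconv⟩ := hlim
  have hf := continuous_bcrObj A γ δ
  exact ⟨AlternatingMinimization.limit_minimizes_fst hxmem hzmin hxmin hf hφ hconv,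
    fun _ hx => AlternatingMinimization.limit_minimizes_snd hxmem hzmin hxmin hf hφ hconv hx⟩

/-- Theorem 1: any limit point (z*, x*) of the C1PO
alternating-minimization iterates is a coordinatewise minimizer of (BCR*). -/
theorem stmt_11 (B U : ℕ) (hB : 0 < B) (hU : 0 < U)
    (A : Matrix (Fin U) (Fin B) ℂ) (γ δ ℓ : ℝ)
    (hδ : 0 < δ) (hδγ : δ < γ) (hℓ : 0 < ℓ)
    (zseq xseq : ℕ → Fin B → ℂ)
    (hxmem : ∀ t, xseq t ∈ boxSet B ℓ)
    (hzmin : ∀ t ≥ 1, ∀ z : Fin B → ℂ,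
      bcrObj A γ δ (zseq (t + 1)) (xseq t) ≤ bcrObj A γ δ z (xseq t))
    (hxmin : ∀ t ≥ 1, ∀ x ∈ boxSet B ℓ,
      bcrObj A γ δ (zseq (t + 1)) (xseq (t + 1)) ≤ bcrObj A γ δ (zseq (t + 1)) x)
    (zstar xstar : Fin B → ℂ)
    (hlim : ∃ φ : ℕ → ℕ, StrictMono φ ∧
      Filter.Tendsto (fun k => (zseq (φ k), xseq (φ k))) Filter.atTop
        (nhds (zstar, xstar))) :
    (∀ z : Fin B → ℂ, bcrObj A γ δ zstar xstar ≤ bcrObj A γ δ z xstar) ∧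
    (∀ x ∈ boxSet B ℓ, bcrObj A γ δ zstar xstar ≤ bcrObj A γ δ zstar x) :=
  stmt_11_general B U A γ δ ℓ zseq xseq hxmem hzmin hxmin zstar xstar hlim
end

section
/- Let B, U be positive integers, A ∈ ℂ^{U×B}, δ > 0, ℓ > 0, and let B_ℓ = {x ∈ ℂ^B : |Re(x_b)| ≤ ℓ and |Im(x_b)| ≤ ℓ for all b}. Define f(x) = (1/2)‖A x‖₂², g(x) = −(δ/2)‖x‖₂², and E(x) = f(x) + g(x). Let τ > 0 satisfy τ·‖Aᴴ A‖₂,₂ < 1 and τδ < 1. Suppose y ∈ B_ℓ and x' minimizes x ↦ g(x) + Re⟨Aᴴ A y, x − y⟩ + (1/(2τ))‖x − y‖₂² over x ∈ B_ℓ. Then E(x') ≤ E(y). In particular, the sequence of objective values E(x^{(t)}) produced by the C2PO iteration x^{(t+1)} = argmin over x ∈ B_ℓ of g(x) + Re⟨Aᴴ A x^{(t)}, x − x^{(t)}⟩ + (1/(2τ))‖x − x^{(t)}‖₂², started from x^{(1)} ∈ B_ℓ, is monotonically nonincreasing. -/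
open Matrix BigOperators

/-- The C2PO objective E(x) = (1/2)‖A x‖₂² − (δ/2)‖x‖₂². -/
noncomputable def c2poObj {B U : ℕ} (A : Matrix (Fin U) (Fin B) ℂ) (δ : ℝ)
    (x : Fin B → ℂ) : ℝ :=
  (1 / 2) * (∑ u, ‖A.mulVec x u‖ ^ 2) - (δ / 2) * (∑ b, ‖x b‖ ^ 2)

/-- The proximal surrogate minimized at each C2PO iteration, based at y:
g(x) + Re⟨Aᴴ A y, x − y⟩ + (1/(2τ))‖x − y‖₂², with g(x) = −(δ/2)‖x‖₂². -/
noncomputable def c2poSurrogate {B U : ℕ} (A : Matrix (Fin U) (Fin B) ℂ) (δ τ : ℝ)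
    (y x : Fin B → ℂ) : ℝ :=
  -(δ / 2) * (∑ b, ‖x b‖ ^ 2) + (star ((Aᴴ * A).mulVec y) ⬝ᵥ (x - y)).re
    + (1 / (2 * τ)) * (∑ b, ‖x b - y b‖ ^ 2)

/-
The argument is the descent lemma of forward-backward splitting. Since
f(y + z) = f(y) + Re⟨Aᴴ A y, z⟩ + (1/2)‖A z‖² and ‖A z‖² = Re⟨Aᴴ A z, z⟩ ≤ ‖Aᴴ A‖ ‖z‖² ≤ ‖z‖² / τ,
the surrogate S_y majorizes the objective up to the constant f(y): E(x) ≤ f(y) + S_y(x), with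
equality at x = y. Hence a minimizer x' of S_y over any set containing y satisfies
E(x') ≤ f(y) + S_y(x') ≤ f(y) + S_y(y) = E(y).
-/

section EuclideanNorm

open WithLp

variable {𝕜 m n : Type*} [RCLike 𝕜] [Fintype m] [Fintype n]

lemma Matrix.sum_norm_sq_eq_norm_toLp_sq (v : n → 𝕜) :
    ∑ i, ‖v i‖ ^ 2 = ‖toLp 2 v‖ ^ 2 :=
  (PiLp.norm_sq_eq_of_L2 _ _).symm

lemma Matrix.sum_norm_add_sq (v w : n → 𝕜) :
    ∑ i, ‖(v + w) i‖ ^ 2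
      = ∑ i, ‖v i‖ ^ 2 + 2 * RCLike.re (star v ⬝ᵥ w) + ∑ i, ‖w i‖ ^ 2 := by
  simp only [sum_norm_sq_eq_norm_toLp_sq, toLp_add, norm_add_sq (𝕜 := 𝕜),
    EuclideanSpace.inner_toLp_toLp, dotProduct_comm w]

lemma Matrix.star_mulVec_dotProduct_mulVec (A : Matrix m n 𝕜) (y z : n → 𝕜) :
    star (A *ᵥ y) ⬝ᵥ (A *ᵥ z) = star ((Aᴴ * A) *ᵥ y) ⬝ᵥ z := by
  rw [star_mulVec, star_mulVec, dotProduct_mulVec, vecMul_vecMul, conjTranspose_mul,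
    conjTranspose_conjTranspose]

lemma Matrix.sum_norm_mulVec_sq_le [DecidableEq n] (A : Matrix m n 𝕜) (z : n → 𝕜) :
    ∑ u, ‖(A *ᵥ z) u‖ ^ 2 ≤ ‖toEuclideanCLM (𝕜 := 𝕜) (Aᴴ * A)‖ * ∑ i, ‖z i‖ ^ 2 := by
  set T := toEuclideanCLM (𝕜 := 𝕜) (Aᴴ * A)
  have h_inner : ∑ u, ‖(A *ᵥ z) u‖ ^ 2 = RCLike.re (inner 𝕜 (T (toLp 2 z)) (toLp 2 z)) := by
    rw [sum_norm_sq_eq_norm_toLp_sq, ← inner_self_eq_norm_sq (𝕜 := 𝕜),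
      EuclideanSpace.inner_toLp_toLp, dotProduct_comm, star_mulVec_dotProduct_mulVec,
      toEuclideanCLM_toLp, EuclideanSpace.inner_toLp_toLp, dotProduct_comm]
  rw [h_inner, sum_norm_sq_eq_norm_toLp_sq]
  calc RCLike.re (inner 𝕜 (T (toLp 2 z)) (toLp 2 z))
      ≤ ‖T (toLp 2 z)‖ * ‖toLp 2 z‖ := re_inner_le_norm _ _
    _ ≤ ‖T‖ * ‖toLp 2 z‖ * ‖toLp 2 z‖ := by gcongr; exact T.le_opNorm _
    _ = ‖T‖ * ‖toLp 2 z‖ ^ 2 := by ring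

end EuclideanNorm

section C2PO

variable {B U : ℕ} (A : Matrix (Fin U) (Fin B) ℂ) (δ τ : ℝ)

lemma c2poObj_le_c2poSurrogate (hτ : 0 < τ)
    (hτA : τ * ‖toEuclideanCLM (𝕜 := ℂ) (Aᴴ * A)‖ ≤ 1) (y x : Fin B → ℂ) :
    c2poObj A δ x ≤ (1 / 2) * ∑ u, ‖(A *ᵥ y) u‖ ^ 2 + c2poSurrogate A δ τ y x := by
  have hL : ‖toEuclideanCLM (𝕜 := ℂ) (Aᴴ * A)‖ ≤ 1 / τ := by
    rwa [le_div_iff₀ hτ, mul_comm]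
  have h_quad : ∑ u, ‖(A *ᵥ (x - y)) u‖ ^ 2 ≤ (1 / τ) * ∑ b, ‖(x - y) b‖ ^ 2 :=
    (sum_norm_mulVec_sq_le A _).trans (by gcongr)
  have h_expand := sum_norm_add_sq (A *ᵥ y) (A *ᵥ (x - y))
  rw [← mulVec_add, add_sub_cancel, star_mulVec_dotProduct_mulVec, RCLike.re_to_complex]
    at h_expand
  simp only [c2poObj, c2poSurrogate, show 1 / (2 * τ) = 1 / 2 * (1 / τ) by ring]
  simp only [Pi.sub_apply] at h_quad
  linarith

lemma c2poObj_eq_add_c2poSurrogate_self (y : Fin B → ℂ) :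
    c2poObj A δ y = (1 / 2) * ∑ u, ‖(A *ᵥ y) u‖ ^ 2 + c2poSurrogate A δ τ y y := by
  simp only [c2poObj, c2poSurrogate, sub_self, dotProduct_zero, Complex.zero_re, norm_zero,
    ne_eq, OfNat.ofNat_ne_zero, not_false_eq_true, zero_pow, Finset.sum_const_zero, mul_zero]
  ring

theorem c2poObj_le_of_isMinOn {s : Set (Fin B → ℂ)} {y x : Fin B → ℂ} (hτ : 0 < τ)
    (hτA : τ * ‖toEuclideanCLM (𝕜 := ℂ) (Aᴴ * A)‖ ≤ 1) (hy : y ∈ s)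
    (hmin : IsMinOn (c2poSurrogate A δ τ y) s x) :
    c2poObj A δ x ≤ c2poObj A δ y :=
  calc c2poObj A δ x ≤ (1 / 2) * ∑ u, ‖(A *ᵥ y) u‖ ^ 2 + c2poSurrogate A δ τ y x :=
        c2poObj_le_c2poSurrogate A δ τ hτ hτA y x
    _ ≤ (1 / 2) * ∑ u, ‖(A *ᵥ y) u‖ ^ 2 + c2poSurrogate A δ τ y y := by
        gcongr; exact isMinOn_iff.mp hmin y hy
    _ = c2poObj A δ y := (c2poObj_eq_add_c2poSurrogate_self A δ τ y).symm

end C2PO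

theorem stmt_13_general (B U : ℕ) (A : Matrix (Fin U) (Fin B) ℂ) (δ ℓ τ : ℝ)
    (hτ : 0 < τ)
    (hτA : τ * ‖Matrix.toEuclideanCLM (𝕜 := ℂ) (Aᴴ * A)‖ < 1) :
    (∀ y ∈ boxSet B ℓ, ∀ x' ∈ boxSet B ℓ,
      (∀ x ∈ boxSet B ℓ, c2poSurrogate A δ τ y x' ≤ c2poSurrogate A δ τ y x) →
      c2poObj A δ x' ≤ c2poObj A δ y) ∧
    (∀ xseq : ℕ → Fin B → ℂ, xseq 1 ∈ boxSet B ℓ →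
      (∀ t ≥ 1, xseq (t + 1) ∈ boxSet B ℓ ∧
        ∀ x ∈ boxSet B ℓ,
          c2poSurrogate A δ τ (xseq t) (xseq (t + 1))
            ≤ c2poSurrogate A δ τ (xseq t) x) →
      ∀ t ≥ 1, c2poObj A δ (xseq (t + 1)) ≤ c2poObj A δ (xseq t)) := by
  refine ⟨fun y hy x' _ hmin ↦ c2poObj_le_of_isMinOn A δ τ hτ hτA.le hy (isMinOn_iff.mpr hmin),
    fun xseq h_one h_step t ht ↦ ?_⟩
  have h_box : ∀ t ≥ 1, xseq t ∈ boxSet B ℓ :=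
    fun t ht ↦ Nat.le_induction h_one (fun n hn _ ↦ (h_step n hn).1) t ht
  exact c2poObj_le_of_isMinOn A δ τ hτ hτA.le (h_box t ht) (isMinOn_iff.mpr (h_step t ht).2)

/-- Theorem 2, monotone decrease: one surrogate-minimization
step of C2PO does not increase the objective E; in particular the sequence of
objective values along the C2PO iteration is monotonically nonincreasing. -/
theorem stmt_13 (B U : ℕ) (hB : 0 < B) (hU : 0 < U)
    (A : Matrix (Fin U) (Fin B) ℂ) (δ ℓ τ : ℝ)
    (hδ : 0 < δ) (hℓ : 0 < ℓ) (hτ : 0 < τ)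
    (hτA : τ * ‖Matrix.toEuclideanCLM (𝕜 := ℂ) (Aᴴ * A)‖ < 1) (hτδ : τ * δ < 1) :
    (∀ y ∈ boxSet B ℓ, ∀ x' ∈ boxSet B ℓ,
      (∀ x ∈ boxSet B ℓ, c2poSurrogate A δ τ y x' ≤ c2poSurrogate A δ τ y x) →
      c2poObj A δ x' ≤ c2poObj A δ y) ∧
    (∀ xseq : ℕ → Fin B → ℂ, xseq 1 ∈ boxSet B ℓ →
      (∀ t ≥ 1, xseq (t + 1) ∈ boxSet B ℓ ∧
        ∀ x ∈ boxSet B ℓ,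
          c2poSurrogate A δ τ (xseq t) (xseq (t + 1))
            ≤ c2poSurrogate A δ τ (xseq t) x) →
      ∀ t ≥ 1, c2poObj A δ (xseq (t + 1)) ≤ c2poObj A δ (xseq t)) :=
  stmt_13_general B U A δ ℓ τ hτ hτA
end
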